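/- arXiv:0708.3249 — 2 statements merged into one kernel-verified Lean document; each statement's English description precedes it below -/
import Mathlib

section
/- Let D be an invertible diagonal real n×n matrix, v ∈ ℝⁿ, a ∈ ℝ, and set β = a − vᵀ D⁻¹ v. Define G₊ = [[a, vᵀ],[v, D]] and G_h = [[a+1, vᵀ],[v, D]]. If det(G_h) ≠ 0 and |det(G₊)| = |det(G_h)| + |det(D)|, then β < −1, and consequently signature(G₊) = signature(G_h) = signature(D) − 1. -/
open Matrix

open scoped Classical in
/-- Extension by zero from a subtype of coordinates. -/
noncomputable def extZero {ι : Type*} [Fintype ι] (s : Finset ι) :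
    ({i // i ∈ s} → ℝ) →ₗ[ℝ] (ι → ℝ) where
  toFun x := fun i => if h : i ∈ s then x ⟨i, h⟩ else 0
  map_add' x y := by funext i; by_cases h : i ∈ s <;> simp [h]
  map_smul' c x := by funext i; by_cases h : i ∈ s <;> simp [h]

open scoped Classical in
theorem posCard_le {ι ι' : Type*} [Fintype ι] [Fintype ι'] (w : ι → ℝ) (w' : ι' → ℝ)
    (e : (ι → ℝ) ≃ₗ[ℝ] (ι' → ℝ))
    (he : ∀ x, ∑ i, w' i * (e x i)^2 = ∑ i, w i * (x i)^2) :
    (Finset.univ.filter fun i => 0 < w i).card ≤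
      (Finset.univ.filter fun i => 0 < w' i).card := by
  by_contra hlt
  push_neg at hlt
  set s := Finset.univ.filter fun i => 0 < w i with hs
  set s' := Finset.univ.filter fun i => 0 < w' i with hs'
  have hmem : ∀ i, i ∈ s ↔ 0 < w i := by intro i; rw [hs, Finset.mem_filter]; simp
  have hmem' : ∀ i, i ∈ s' ↔ 0 < w' i := by intro i; rw [hs', Finset.mem_filter]; simp
  let F : ({i // i ∈ s} → ℝ) →ₗ[ℝ] ({j // j ∈ s'} → ℝ) :=
    (LinearMap.funLeft ℝ ℝ Subtype.val) ∘ₗ (e : (ι → ℝ) →ₗ[ℝ] (ι' → ℝ)) ∘ₗ extZero s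
  have hnotinj : ¬ Function.Injective F := by
    intro hinj
    have h2 := LinearMap.finrank_le_finrank_of_injective hinj
    simp only [Module.finrank_fintype_fun_eq_card, Fintype.card_coe] at h2
    omega
  rw [← LinearMap.ker_eq_bot] at hnotinj
  obtain ⟨x, hxker, hx0⟩ := Submodule.exists_mem_ne_zero_of_ne_bot hnotinj
  set y := extZero s x with hy
  have hyi : ∀ i (h : i ∈ s), y i = x ⟨i, h⟩ := by intro i h; simp [hy, extZero, h]
  have hyi' : ∀ i, i ∉ s → y i = 0 := by intro i h; simp [hy, extZero, h]
  have hQpos : 0 < ∑ i, w i * (y i)^2 := by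
    apply Finset.sum_pos'
    · intro i _
      by_cases h : i ∈ s
      · have hw : 0 < w i := (hmem i).mp h
        positivity
      · simp [hyi' i h]
    · obtain ⟨j, hj⟩ : ∃ j, x j ≠ 0 := by
        by_contra hc; push_neg at hc; exact hx0 (funext hc)
      refine ⟨j.1, Finset.mem_univ _, ?_⟩
      have hw : 0 < w j.1 := (hmem j.1).mp j.2
      have : (0:ℝ) < (y j.1)^2 := by
        rw [hyi j.1 j.2]
        exact (sq_nonneg _).lt_of_ne (Ne.symm (pow_ne_zero 2 hj))
      exact mul_pos hw this
  have hQnonpos : ∑ i, w' i * (e y i)^2 ≤ 0 := by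
    apply Finset.sum_nonpos
    intro i' _
    by_cases h : i' ∈ s'
    · have : e y i' = 0 := by
        have := congrFun (LinearMap.mem_ker.mp hxker) ⟨i', h⟩
        simpa [F, LinearMap.funLeft] using this
      simp [this]
    · have hw : w' i' ≤ 0 := by
        by_contra hc; push_neg at hc; exact h ((hmem' i').mpr hc)
      nlinarith [sq_nonneg (e y i')]
  linarith [he y]

open scoped Classical in
theorem posCard_eq {ι ι' : Type*} [Fintype ι] [Fintype ι'] (w : ι → ℝ) (w' : ι' → ℝ)
    (e : (ι → ℝ) ≃ₗ[ℝ] (ι' → ℝ))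
    (he : ∀ x, ∑ i, w' i * (e x i)^2 = ∑ i, w i * (x i)^2) :
    (Finset.univ.filter fun i => 0 < w i).card =
      (Finset.univ.filter fun i => 0 < w' i).card := by
  refine le_antisymm (posCard_le w w' e he) (posCard_le w' w e.symm fun x => ?_)
  have := he (e.symm x)
  simpa using this.symm

open scoped Classical in
theorem negCard_eq {ι ι' : Type*} [Fintype ι] [Fintype ι'] (w : ι → ℝ) (w' : ι' → ℝ)
    (e : (ι → ℝ) ≃ₗ[ℝ] (ι' → ℝ))
    (he : ∀ x, ∑ i, w' i * (e x i)^2 = ∑ i, w i * (x i)^2) :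
    (Finset.univ.filter fun i => w i < 0).card =
      (Finset.univ.filter fun i => w' i < 0).card := by
  have h := posCard_eq (fun i => -w i) (fun i => -w' i) e (fun x => by
    simp only [neg_mul, Finset.sum_neg_distrib, he x])
  simpa [neg_pos] using h

open scoped Classical in
theorem matrixSignature_eq {ι ι' : Type*} [Fintype ι] [Fintype ι'] [DecidableEq ι]
    (A : Matrix ι ι ℝ) (w : ι' → ℝ)
    (e : (ι → ℝ) ≃ₗ[ℝ] (ι' → ℝ))
    (he : ∀ x, ∑ i, w i * (e x i)^2 = x ⬝ᵥ A *ᵥ x) :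
    ∀ h : A.IsHermitian,
    ((Finset.univ.filter fun i => 0 < h.eigenvalues i).card : ℤ) -
      ((Finset.univ.filter fun i => h.eigenvalues i < 0).card : ℤ)
    = ((Finset.univ.filter fun i => 0 < w i).card : ℤ) -
      ((Finset.univ.filter fun i => w i < 0).card : ℤ) := by
  intro h
  set U : Matrix ι ι ℝ := (h.eigenvectorUnitary : Matrix ι ι ℝ) with hU
  have hmem := h.eigenvectorUnitary.2
  rw [Unitary.mem_iff] at hmem
  have hInv : Invertible (star U) := ⟨U, hmem.2, hmem.1⟩
  let e₀ : (ι → ℝ) ≃ₗ[ℝ] (ι → ℝ) := (star U).toLinearEquiv' hInv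
  have he₀ : ∀ x, ∑ i, h.eigenvalues i * (e₀ x i)^2 = x ⬝ᵥ A *ᵥ x := by
    intro x
    have hspec := h.spectral_theorem
    have hsU : star U = Uᵀ := by
      simp [Matrix.star_eq_conjTranspose, Matrix.conjTranspose,
        Matrix.transpose_map, Matrix.map_id]
      rfl
    have he0x : e₀ x = Uᵀ *ᵥ x := by
      show Matrix.toLin' (star U) x = _
      rw [Matrix.toLin'_apply, hsU]
    calc ∑ i, h.eigenvalues i * (e₀ x i)^2
        = (Uᵀ *ᵥ x) ⬝ᵥ (Matrix.diagonal h.eigenvalues *ᵥ (Uᵀ *ᵥ x)) := by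
          simp only [dotProduct, Matrix.mulVec_diagonal, he0x]
          exact Finset.sum_congr rfl fun i _ => by ring
      _ = x ⬝ᵥ A *ᵥ x := by
          conv_rhs => rw [hspec, Unitary.conjStarAlgAut_apply, hsU]
          have hco : (RCLike.ofReal ∘ h.eigenvalues : ι → ℝ) = h.eigenvalues := by
            funext i; simp [RCLike.ofReal]
          rw [hco, ← Matrix.mulVec_mulVec, ← Matrix.mulVec_mulVec,
            dotProduct_mulVec x U, ← Matrix.mulVec_transpose]
  have key : ∀ x, ∑ i, w i * ((e₀.symm.trans e) x i)^2 = ∑ i, h.eigenvalues i * (x i)^2 := by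
    intro x
    have h1 := he (e₀.symm x)
    have h2 := he₀ (e₀.symm x)
    simp only [LinearEquiv.trans_apply] at *
    rw [h1, ← h2]
    simp
  rw [posCard_eq h.eigenvalues w (e₀.symm.trans e) key,
    negCard_eq h.eigenvalues w (e₀.symm.trans e) key]

open scoped Classical in
theorem card_filter_sum {a b : Type*} [Fintype a] [Fintype b] (p : a ⊕ b → Prop) :
    (Finset.univ.filter p).card =
      (Finset.univ.filter fun x => p (Sum.inl x)).card +
        (Finset.univ.filter fun x => p (Sum.inr x)).card := by
  rw [← Fintype.card_subtype, ← Fintype.card_subtype, ← Fintype.card_subtype,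
    Fintype.card_congr (Equiv.subtypeSum (p := p)), Fintype.card_sum]

theorem arrow_qf (n : ℕ) (α : Fin n → ℝ) (hα : ∀ i, α i ≠ 0) (v : Fin n → ℝ) (a β : ℝ)
    (hβ : β = a - ∑ i, v i ^ 2 / α i)
    (G : Matrix (Unit ⊕ Fin n) (Unit ⊕ Fin n) ℝ)
    (hG : G = Matrix.fromBlocks (fun _ _ => a) (fun _ j => v j) (fun i _ => v i)
      (Matrix.diagonal α)) :
    ∃ e : ((Unit ⊕ Fin n) → ℝ) ≃ₗ[ℝ] ((Unit ⊕ Fin n) → ℝ),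
      ∀ x, ∑ i, (Sum.elim (fun _ => β) α) i * (e x i) ^ 2 = x ⬝ᵥ G *ᵥ x := by
  let f : ((Unit ⊕ Fin n) → ℝ) →ₗ[ℝ] ((Unit ⊕ Fin n) → ℝ) :=
    { toFun := fun x => Sum.elim (fun _ => x (Sum.inl ()))
        (fun i => x (Sum.inr i) + (v i / α i) * x (Sum.inl ()))
      map_add' := fun x y => by funext i; cases i <;> simp <;> ring
      map_smul' := fun c x => by funext i; cases i <;> simp <;> ring }
  let g : ((Unit ⊕ Fin n) → ℝ) →ₗ[ℝ] ((Unit ⊕ Fin n) → ℝ) :=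
    { toFun := fun x => Sum.elim (fun _ => x (Sum.inl ()))
        (fun i => x (Sum.inr i) - (v i / α i) * x (Sum.inl ()))
      map_add' := fun x y => by funext i; cases i <;> simp <;> ring
      map_smul' := fun c x => by funext i; cases i <;> simp <;> ring }
  have hfg : f ∘ₗ g = LinearMap.id := by
    apply LinearMap.ext; intro x; funext i
    cases i <;> simp [f, g] <;> ring
  have hgf : g ∘ₗ f = LinearMap.id := by
    apply LinearMap.ext; intro x; funext i
    cases i <;> simp [f, g] <;> ring
  refine ⟨LinearEquiv.ofLinear f g hfg hgf, fun x => ?_⟩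
  · set x₀ := x (Sum.inl ()) with hx0
    simp only [LinearEquiv.ofLinear_apply, f, LinearMap.coe_mk, AddHom.coe_mk]
    rw [Fintype.sum_sum_type]
    have hmv : ∀ i : Unit ⊕ Fin n, (G *ᵥ x) i =
        Sum.elim (fun _ => a * x₀ + ∑ j, v j * x (Sum.inr j))
          (fun i => v i * x₀ + α i * x (Sum.inr i)) i := by
      intro i
      cases i with
      | inl u =>
        simp [hG, Matrix.mulVec, dotProduct, Fintype.sum_sum_type, Matrix.fromBlocks, Matrix.of_apply, hx0]
      | inr i =>
        simp [hG, Matrix.mulVec, dotProduct, Fintype.sum_sum_type, Matrix.fromBlocks, Matrix.of_apply, hx0,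
          Matrix.diagonal_apply, Finset.sum_ite_eq, ite_mul]
    simp only [dotProduct, Fintype.sum_sum_type, hmv]
    simp only [Sum.elim_inl, Sum.elim_inr, Finset.univ_unique, Finset.sum_const,
      Finset.card_singleton, one_smul, Finset.sum_singleton,
      show (default : Unit) = () from rfl]
    have expand : ∑ i, α i * (x (Sum.inr i) + v i / α i * x₀) ^ 2
        = (∑ i, x (Sum.inr i) * (v i * x₀ + α i * x (Sum.inr i)))
          + x₀ * (∑ i, v i * x (Sum.inr i)) + x₀ ^ 2 * (∑ i, v i ^ 2 / α i) := by
      rw [Finset.mul_sum, Finset.mul_sum, ← Finset.sum_add_distrib, ← Finset.sum_add_distrib]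
      refine Finset.sum_congr rfl fun i _ => ?_
      have h := hα i
      field_simp
      ring
    rw [expand]
    linear_combination (x₀ ^ 2) * hβ

open scoped Classical in
/-- The signature of a real symmetric matrix: the number of positive eigenvalues
minus the number of negative eigenvalues, counted with multiplicity. -/
noncomputable def matrixSignature {n : Type*} [Fintype n] [DecidableEq n]
    (A : Matrix n n ℝ) : ℤ :=
  if h : A.IsHermitian then
    ((Finset.univ.filter fun i => 0 < h.eigenvalues i).card : ℤ) -
      ((Finset.univ.filter fun i => h.eigenvalues i < 0).card : ℤ)
  else 0

theorem stmt2 (n : ℕ) (α : Fin n → ℝ) (hα : ∀ i, α i ≠ 0) (v : Fin n → ℝ) (a : ℝ)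
    (D : Matrix (Fin n) (Fin n) ℝ) (hD : D = Matrix.diagonal α)
    (β : ℝ) (hβ : β = a - v ⬝ᵥ (D⁻¹ *ᵥ v))
    (Gp Gh : Matrix (Unit ⊕ Fin n) (Unit ⊕ Fin n) ℝ)
    (hGp : Gp = Matrix.fromBlocks (fun _ _ => a) (fun _ j => v j) (fun i _ => v i) D)
    (hGh : Gh = Matrix.fromBlocks (fun _ _ => a + 1) (fun _ j => v j) (fun i _ => v i) D)
    (hdetGh : Gh.det ≠ 0)
    (hdets : |Gp.det| = |Gh.det| + |D.det|) :
    β < -1 ∧ matrixSignature Gp = matrixSignature Gh ∧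
      matrixSignature Gp = matrixSignature D - 1 := by
  classical
  have hdetD : D.det = ∏ i, α i := by rw [hD, Matrix.det_diagonal]
  have hdetD0 : D.det ≠ 0 := by
    rw [hdetD]; exact Finset.prod_ne_zero_iff.mpr fun i _ => hα i
  have hInvD : Invertible D := D.invertibleOfIsUnitDet (isUnit_iff_ne_zero.mpr hdetD0)
  have hDinv : D⁻¹ = Matrix.diagonal (fun i => (α i)⁻¹) := by
    rw [hD]
    apply Matrix.inv_eq_right_inv
    rw [Matrix.diagonal_mul_diagonal]
    have : (fun i => α i * (α i)⁻¹) = fun _ : Fin n => (1:ℝ) := by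
      funext i; exact mul_inv_cancel₀ (hα i)
    rw [this, Matrix.diagonal_one]
  have hv1 : v ⬝ᵥ D⁻¹ *ᵥ v = ∑ i, v i ^ 2 / α i := by
    rw [hDinv]
    simp only [dotProduct, Matrix.mulVec_diagonal]
    exact Finset.sum_congr rfl fun i _ => by rw [div_eq_mul_inv]; ring
  have hβ' : β = a - ∑ i, v i ^ 2 / α i := by rw [hβ, hv1]
  -- determinants
  have hdet : ∀ c : ℝ,
      (Matrix.fromBlocks ((fun _ _ => c) : Matrix Unit Unit ℝ) (fun _ j => v j)
          (fun i _ => v i) D).det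
        = D.det * (c - ∑ i, v i ^ 2 / α i) := by
    intro c
    refine (Matrix.det_fromBlocks₂₂ _ _ _ _).trans ?_
    congr 1
    rw [Matrix.det_unique]; erw [Matrix.sub_apply]
    congr 1
    rw [Matrix.invOf_eq_nonsing_inv, hDinv]
    show (Matrix.of (fun (_ : Unit) (j : Fin n) => v j) * Matrix.diagonal (fun i => (α i)⁻¹) *
      Matrix.of (fun (i : Fin n) (_ : Unit) => v i)) default default = _
    simp only [Matrix.of_apply, Matrix.mul_apply, Matrix.diagonal_apply, mul_ite, mul_zero,
      Finset.sum_ite_eq, Finset.sum_ite_eq', Finset.mem_univ, if_true, ite_mul, zero_mul]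
    exact Finset.sum_congr rfl fun i _ => by
      rw [div_eq_mul_inv]; ring
  have hdetGp : Gp.det = D.det * β := by rw [hGp, hdet a, ← hβ']
  have hdetGh' : Gh.det = D.det * (β + 1) := by
    rw [hGh, hdet (a + 1), hβ']; ring
  have hb1 : β + 1 ≠ 0 := fun h0 => hdetGh (by rw [hdetGh', h0, mul_zero])
  have habs : |β| = |β + 1| + 1 := by
    have h1 : |D.det| * |β| = |D.det| * (|β + 1| + 1) := by
      rw [← abs_mul, ← hdetGp, hdets, hdetGh', abs_mul]; ring
    exact mul_left_cancel₀ (abs_ne_zero.mpr hdetD0) h1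
  have hblt : β < -1 := by
    rcases hb1.lt_or_gt with h | h
    · linarith
    · rcases abs_cases β with ⟨e1, e2⟩ | ⟨e1, e2⟩ <;>
        rcases abs_cases (β + 1) with ⟨f1, f2⟩ | ⟨f1, f2⟩ <;> linarith
  have hb1lt : β + 1 < 0 := by
    rcases hb1.lt_or_gt with h | h
    · exact h
    · rcases abs_cases β with ⟨e1, e2⟩ | ⟨e1, e2⟩ <;> linarith
  -- quadratic form equivalences
  obtain ⟨eP, heP⟩ := arrow_qf n α hα v a β hβ' Gp (by rw [hGp, hD])
  obtain ⟨eH, heH⟩ := arrow_qf n α hα v (a + 1) (β + 1) (by rw [hβ']; ring) Gh (by rw [hGh, hD])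
  -- Hermitian
  have hDH : Dᴴ = D := by
    rw [hD, Matrix.diagonal_conjTranspose]
    simp
  have herm : ∀ c : ℝ,
      (Matrix.fromBlocks ((fun _ _ => c) : Matrix Unit Unit ℝ) (fun _ j => v j)
        (fun i _ => v i) D).IsHermitian := by
    intro c
    have h11 : ((fun _ _ => c) : Matrix Unit Unit ℝ)ᴴ = (fun _ _ => c) := by
      ext i j; exact (Matrix.conjTranspose_apply _ i j).trans (by simp)
    have h21 : ((fun i _ => v i) : Matrix (Fin n) Unit ℝ)ᴴ = fun _ j => v j := by
      ext i j; exact (Matrix.conjTranspose_apply ((fun i _ => v i) : Matrix (Fin n) Unit ℝ) j i).trans (by simp)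
    have h12 : ((fun _ j => v j) : Matrix Unit (Fin n) ℝ)ᴴ = fun i _ => v i := by
      ext i j; exact (Matrix.conjTranspose_apply ((fun _ j => v j) : Matrix Unit (Fin n) ℝ) j i).trans (by simp)
    rw [Matrix.IsHermitian]; refine (Matrix.fromBlocks_conjTranspose _ _ _ _).trans ?_; rw [h11, h21, h12, hDH]
  have hHermGp : Gp.IsHermitian := by rw [hGp]; exact herm a
  have hHermGh : Gh.IsHermitian := by rw [hGh]; exact herm (a + 1)
  have hHermD : D.IsHermitian := hDH
  set P := (Finset.univ.filter fun i => 0 < α i).card with hP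
  set N := (Finset.univ.filter fun i => α i < 0).card with hN
  -- signature of D
  have hsigD : matrixSignature D = (P : ℤ) - N := by
    rw [matrixSignature, dif_pos hHermD]
    have heD : ∀ x : Fin n → ℝ, ∑ i, α i * ((LinearEquiv.refl ℝ (Fin n → ℝ)) x i) ^ 2
        = x ⬝ᵥ D *ᵥ x := by
      intro x
      rw [hD]
      simp only [LinearEquiv.refl_apply, dotProduct, Matrix.mulVec_diagonal]
      exact Finset.sum_congr rfl fun i _ => by ring
    rw [matrixSignature_eq D α (LinearEquiv.refl ℝ _) heD hHermD]
  -- cardinalities over the sum type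
  have hcard_pos : ∀ β' : ℝ, β' < 0 →
      (Finset.univ.filter fun i => 0 < (Sum.elim (fun _ : Unit => β') α) i).card = P := by
    intro β' hβ'0
    rw [card_filter_sum]
    have h0 : (Finset.univ.filter fun x : Unit =>
        0 < Sum.elim (fun _ : Unit => β') α (Sum.inl x)).card = 0 := by
      rw [Finset.card_eq_zero, Finset.filter_eq_empty_iff]
      intro u _
      simp only [Sum.elim_inl]
      linarith
    rw [h0, zero_add]
    simp only [Sum.elim_inr]
    exact hP.symm
  have hcard_neg : ∀ β' : ℝ, β' < 0 →
      (Finset.univ.filter fun i => (Sum.elim (fun _ : Unit => β') α) i < 0).card = 1 + N := by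
    intro β' hβ'0
    rw [card_filter_sum]
    have h1 : (Finset.univ.filter fun x : Unit =>
        Sum.elim (fun _ : Unit => β') α (Sum.inl x) < 0).card = 1 := by
      rw [Finset.filter_true_of_mem fun _ _ => by simpa using hβ'0]
      simp
    rw [h1]
    simp only [Sum.elim_inr]
    rw [hN]; congr 1
  -- signature of Gp and Gh
  have hβneg : β < 0 := by linarith
  have hsigGp : matrixSignature Gp = (P : ℤ) - (1 + N) := by
    rw [matrixSignature, dif_pos hHermGp,
      matrixSignature_eq Gp (Sum.elim (fun _ => β) α) eP heP hHermGp,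
      hcard_pos β hβneg, hcard_neg β hβneg]
    push_cast
    ring
  have hsigGh : matrixSignature Gh = (P : ℤ) - (1 + N) := by
    rw [matrixSignature, dif_pos hHermGh,
      matrixSignature_eq Gh (Sum.elim (fun _ => β + 1) α) eH heH hHermGh,
      hcard_pos (β + 1) hb1lt, hcard_neg (β + 1) hb1lt]
    push_cast
    ring
  refine ⟨hblt, ?_, ?_⟩
  · rw [hsigGp, hsigGh]
  · rw [hsigGp, hsigD]
    push_cast
    ring
end

section
/- Let σ : T → ℤ and d : T → ℤ be functions, and suppose Q ⊆ T is the inductive set generated by: a base element u with σ(u) = 0 in Q; and closure under the rule that x ∈ Q whenever there exist x₀, x₁ ∈ Q (related to x by a given relation) with d(x) = d(x₀) + d(x₁), d(x₀) > 0, d(x₁) > 0, σ(x₀) = σ(x) + 1 (oriented resolution shift), and some integer e with σ(x₁) = σ(x) + e. Suppose further that for each x ∈ Q one is given finite-dimensional bigraded F-vector spaces fitting into the grading-shifted exact triangles H^{*−σ(x₁)/2}(x₁) → H^{*−σ(x)/2}(x) → H^{*−σ(x₀)/2}(x₀) → H^{*−σ(x₁)/2−1}(x₁), where H(u) is one-dimensional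 supported in grading 0. Then for every x ∈ Q, H(x) is supported entirely in the single δ-grading −σ(x)/2. -/
/-- The inductive set generated by a base element `u` with `σ u = 0`, closed under the
rule that `x` belongs whenever it has resolutions `x₀, x₁` in the set with
`d x = d x₀ + d x₁`, `d x₀ > 0`, `d x₁ > 0`, `σ x₀ = σ x + 1`, and `σ x₁ = σ x + e`
for some integer `e`. -/
inductive QSet {T : Type*} (σ d : T → ℤ) (u : T) (R : T → T → T → Prop) : T → Prop
  | base : σ u = 0 → QSet σ d u R u
  | step (x x₀ x₁ : T) : R x x₀ x₁ → QSet σ d u R x₀ → QSet σ d u R x₁ →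
      d x = d x₀ + d x₁ → 0 < d x₀ → 0 < d x₁ →
      σ x₀ = σ x + 1 → (∃ e : ℤ, σ x₁ = σ x + e) → QSet σ d u R x

/-- Abstract form of the inductive proof that quasi-alternating links are homologically
σ-thin: if the homology of the base element is one-dimensional in grading `0`, and for
each step there are grading-shifted exact triangles
`H^{*−σ(x₁)/2}(x₁) → H^{*−σ(x)/2}(x) → H^{*−σ(x₀)/2}(x₀) → H^{*−σ(x₁)/2−1}(x₁)`,
then the homology of every element of the set is supported in the single
δ-grading `−σ(x)/2`. -/
theorem stmt14 (F : Type*) [Field F] {T : Type*} (σ d : T → ℤ) (u : T)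
    (R : T → T → T → Prop) (hσu : σ u = 0)
    (H : T → ℚ → Type*) [∀ x q, AddCommGroup (H x q)] [∀ x q, Module F (H x q)]
    [∀ x q, FiniteDimensional F (H x q)]
    (hu₁ : Module.finrank F (H u 0) = 1)
    (hu₂ : ∀ q : ℚ, q ≠ 0 → Subsingleton (H u q))
    (htriangle : ∀ x x₀ x₁ : T, R x x₀ x₁ → QSet σ d u R x₀ → QSet σ d u R x₁ →
      d x = d x₀ + d x₁ → 0 < d x₀ → 0 < d x₁ → σ x₀ = σ x + 1 →
      ∃ (f : ∀ q : ℚ, H x₁ (q - (σ x₁ : ℚ) / 2) →ₗ[F] H x (q - (σ x : ℚ) / 2))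
        (g : ∀ q : ℚ, H x (q - (σ x : ℚ) / 2) →ₗ[F] H x₀ (q - (σ x₀ : ℚ) / 2))
        (h : ∀ q : ℚ, H x₀ (q - (σ x₀ : ℚ) / 2) →ₗ[F] H x₁ (q - (σ x₁ : ℚ) / 2 - 1)),
        (∀ q, LinearMap.range (f q) = LinearMap.ker (g q)) ∧
        (∀ q, LinearMap.range (g q) = LinearMap.ker (h q)) ∧
        (∀ q, LinearMap.range ((by rw [show q + 1 - (σ x₁ : ℚ) / 2 - 1 =
            q - (σ x₁ : ℚ) / 2 by ring]; exact LinearMap.id : H x₁ (q + 1 - (σ x₁ : ℚ) / 2 - 1) →ₗ[F]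
            H x₁ (q - (σ x₁ : ℚ) / 2)).comp (h (q + 1))) = LinearMap.ker (f q))) :
    ∀ x : T, QSet σ d u R x → ∀ q : ℚ, q ≠ -(σ x : ℚ) / 2 → Subsingleton (H x q) := by
  intro x hx
  induction hx with
  | base h =>
    intro q hq
    apply hu₂
    simpa [hσu] using hq
  | step x x₀ x₁ hR h₀ h₁ hd hd₀ hd₁ hσ₀ hσ₁ ih₀ ih₁ =>
    intro q hq
    obtain ⟨f, g, h, hfg, hgh, hhf⟩ := htriangle x x₀ x₁ hR h₀ h₁ hd hd₀ hd₁ hσ₀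
    set q' : ℚ := q + (σ x : ℚ) / 2 with hq'def
    have hqeq : q = q' - (σ x : ℚ) / 2 := by rw [hq'def]; ring
    have hq'0 : q' ≠ 0 := by
      intro h0
      apply hq
      rw [hqeq, h0]; ring
    have hsub₁ : Subsingleton (H x₁ (q' - (σ x₁ : ℚ) / 2)) := by
      apply ih₁
      intro heq
      exact hq'0 (by linear_combination heq)
    have hsub₀ : Subsingleton (H x₀ (q' - (σ x₀ : ℚ) / 2)) := by
      apply ih₀
      intro heq
      exact hq'0 (by linear_combination heq)
    have hf0 : LinearMap.range (f q') = ⊥ := by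
      rw [LinearMap.range_eq_bot]
      exact LinearMap.ext fun a => by rw [Subsingleton.elim a 0]; simp
    have hg0 : LinearMap.ker (g q') = ⊤ := by
      rw [LinearMap.ker_eq_top]
      exact LinearMap.ext fun a => Subsingleton.elim _ _
    have hbt : (⊥ : Submodule F (H x (q' - (σ x : ℚ) / 2))) = ⊤ := by
      rw [← hf0, hfg q', hg0]
    have : Subsingleton (H x (q' - (σ x : ℚ) / 2)) := by
      constructor
      intro a b
      have ha : a ∈ (⊥ : Submodule F (H x (q' - (σ x : ℚ) / 2))) := hbt ▸ Submodule.mem_top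
      have hb : b ∈ (⊥ : Submodule F (H x (q' - (σ x : ℚ) / 2))) := hbt ▸ Submodule.mem_top
      rw [Submodule.mem_bot] at ha hb
      rw [ha, hb]
    rw [hqeq]
    exact this
end
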